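/- A Banach space X has the diametral strong diameter two property (DSD2P) if and only if X has the Daugavet property, i.e. if and only if every rank-one bounded linear operator T : X → X satisfies ‖Id − T‖ = 1 + ‖T‖. -/

import Mathlib

open Set

/-- The ballSlice `S(f, α)` of the closed unit ball of `X` determined by a functional `f`
and `α > 0`: the set of points `x` of the closed unit ball with `Re (f x) > 1 - α`. -/
def ballSlice {𝕜 : Type*} [RCLike 𝕜] {X : Type*} [NormedAddCommGroup X] [NormedSpace 𝕜 X]
    (f : X →L[𝕜] 𝕜) (α : ℝ) : Set X :=
  {x : X | ‖x‖ ≤ 1 ∧ 1 - α < RCLike.re (f x)}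

/-- `C` is a convex combination of slices of the closed unit ball of `X`:
`C = λ₁ S₁ + ⋯ + λₙ Sₙ` where `n ≥ 1`, each `Sᵢ = S(fᵢ, αᵢ)` is a ballSlice (with `‖fᵢ‖ = 1`,
`αᵢ > 0`), each `λᵢ > 0` and `∑ λᵢ = 1`. -/
def IsConvexCombOfSlices {𝕜 : Type*} [RCLike 𝕜] (X : Type*) [NormedAddCommGroup X]
    [NormedSpace 𝕜 X] (C : Set X) : Prop :=
  ∃ (n : ℕ), 0 < n ∧ ∃ (f : Fin n → (X →L[𝕜] 𝕜)) (α lam : Fin n → ℝ),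
    (∀ i, ‖f i‖ = 1) ∧ (∀ i, 0 < α i) ∧ (∀ i, 0 < lam i) ∧ (∑ i, lam i) = 1 ∧
    C = {x : X | ∃ y : Fin n → X, (∀ i, y i ∈ ballSlice (f i) (α i)) ∧
      x = ∑ i, (lam i : 𝕜) • y i}

/-- `X` has the diametral strong diameter two property (DSD2P): for every convex
combination of slices `C` of the closed unit ball, every `δ > 0` and every `x ∈ C`,
there is `y ∈ C` with `‖x - y‖ > 1 + ‖x‖ - δ`. -/
def DSD2P (𝕜 : Type*) [RCLike 𝕜] (X : Type*) [NormedAddCommGroup X]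
    [NormedSpace 𝕜 X] : Prop :=
  ∀ C : Set X, IsConvexCombOfSlices (𝕜 := 𝕜) X C →
    ∀ δ > (0 : ℝ), ∀ x ∈ C, ∃ y ∈ C, ‖x - y‖ > 1 + ‖x‖ - δ

/-!
Both properties are equivalent to the slice condition of Kadets, Shvidkoy, Sirotkin and Werner:
for every slice `S` of the unit ball, every unit vector `u` and every `ε > 0` there is `w ∈ S`
with `‖u - w‖ > 2 - ε`.

For a rank-one operator `φ ⊗ e` with `‖e‖ = 1`, a point `w` of a thin slice of `φ / ‖φ‖` far
from `e` has `‖w - φ(w) e‖` close to `1 + ‖φ‖`; conversely the Daugavet equation for `f ⊗ u`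
produces, after a rotation, points of `S(f, ε)` far from `u`.

If `X` has the DSD2P, apply it at the point `l v₀ + (1 - l) u` of `l S(f, l) + (1 - l) S(h, 1)`,
where `h` norms `u` and `l` is small: a functional norming the difference with a diametral
partner `l v + (1 - l) w` is almost `1` at `u` and almost `-1` at `v ∈ S(f, l)`. Conversely,
for `x = ∑ λᵢ yᵢ` choose successively `wᵢ ∈ Sᵢ` with `‖u - wᵢ‖` close to `1 + ‖u‖`, replacing
`u` by the direction of `u - wᵢ`; a functional almost norming the last direction is almost `‖x‖`
at `x` and almost `-1` at every `wᵢ`, so `∑ λᵢ wᵢ` is almost diametral to `x`.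
-/

section

variable {𝕜 : Type*} [RCLike 𝕜] {X : Type*} [NormedAddCommGroup X] [NormedSpace 𝕜 X]

open RCLike ContinuousLinearMap

theorem abs_re_apply_le_norm {p : X →L[𝕜] 𝕜} (hp : ‖p‖ ≤ 1) (x : X) : |re (p x)| ≤ ‖x‖ :=
  (abs_re_le_norm _).trans ((p.le_of_opNorm_le hp x).trans_eq (one_mul _))

theorem ballSlice_mono {f : X →L[𝕜] 𝕜} {α β : ℝ} (h : α ≤ β) : ballSlice f α ⊆ ballSlice f β :=
  fun _ hx => ⟨hx.1, by linarith [hx.2]⟩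

theorem nonempty_ballSlice {f : X →L[𝕜] 𝕜} (hf : ‖f‖ = 1) {α : ℝ} (hα : 0 < α) :
    (ballSlice f α).Nonempty := by
  obtain ⟨x, hx, hfx⟩ := f.exists_lt_apply_of_lt_opNorm (r := 1 - α) (by linarith)
  obtain ⟨c, hc, hcx⟩ := exists_norm_eq_mul_self (f x)
  refine ⟨c • x, ?_, ?_⟩
  · rw [norm_smul, hc, one_mul]
    exact hx.le
  · rwa [map_smul, smul_eq_mul, ← hcx, ofReal_re]

theorem one_sub_four_mul_lt_re_mul {a b : 𝕜} (ha : ‖a‖ ≤ 1) (hb : ‖b‖ ≤ 1) {ε : ℝ}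
    (hεa : 1 - ε < re a) (hεb : 1 - ε < re b) : 1 - 4 * ε < re (a * b) := by
  have hna : re a * re a + im a * im a ≤ 1 := by
    rw [← norm_sq_eq_def]; nlinarith [norm_nonneg a]
  have hnb : re b * re b + im b * im b ≤ 1 := by
    rw [← norm_sq_eq_def]; nlinarith [norm_nonneg b]
  rw [mul_re]
  have hra := (re_le_norm a).trans ha
  have hrb := (re_le_norm b).trans hb
  nlinarith [sq_nonneg (im a - im b), sq_nonneg (1 - re a), sq_nonneg (1 - re b),
    mul_nonneg (sub_nonneg.mpr hra) (sub_nonneg.mpr hrb)]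

theorem norm_sum_ofReal_smul_le_one {ι : Type*} [Fintype ι] {lam : ι → ℝ} {y : ι → X}
    (hlam : ∀ i, 0 ≤ lam i) (hsum : ∑ i, lam i = 1) (hy : ∀ i, ‖y i‖ ≤ 1) :
    ‖∑ i, (lam i : 𝕜) • y i‖ ≤ 1 := by
  calc ‖∑ i, (lam i : 𝕜) • y i‖ ≤ ∑ i, lam i := by
        refine (norm_sum_le _ _).trans (Finset.sum_le_sum fun i _ => ?_)
        rw [norm_smul, norm_ofReal, abs_of_nonneg (hlam i)]
        exact mul_le_of_le_one_right (hlam i) (hy i)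
    _ = 1 := hsum

theorem re_apply_sum_ofReal_smul_lt {ι : Type*} [Fintype ι] [Nonempty ι] {lam : ι → ℝ}
    (hlam : ∀ i, 0 < lam i) (hsum : ∑ i, lam i = 1) (h : X →L[𝕜] 𝕜) {w : ι → X} {c : ℝ}
    (hw : ∀ i, re (h (w i)) < c) : re (h (∑ i, (lam i : 𝕜) • w i)) < c := by
  rw [map_sum, map_sum]
  simp only [map_smul, smul_eq_mul, re_ofReal_mul]
  calc ∑ i, lam i * re (h (w i)) < ∑ i, lam i * c :=
        Finset.sum_lt_sum_of_nonempty Finset.univ_nonempty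
          fun i _ => mul_lt_mul_of_pos_left (hw i) (hlam i)
    _ = c := by rw [← Finset.sum_mul, hsum, one_mul]

variable (𝕜 X) in
def DaugavetSliceCondition : Prop :=
  ∀ f : X →L[𝕜] 𝕜, ‖f‖ = 1 → ∀ u : X, ‖u‖ = 1 → ∀ ε > (0 : ℝ),
    ∃ w ∈ ballSlice f ε, 2 - ε < ‖u - w‖

variable (𝕜 X) in
def DaugavetProperty : Prop :=
  ∀ T : X →L[𝕜] X, Module.finrank 𝕜 (LinearMap.range (T : X →ₗ[𝕜] X)) = 1 →
    ‖ContinuousLinearMap.id 𝕜 X - T‖ = 1 + ‖T‖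

theorem DaugavetSliceCondition.exists_mem_ballSlice_lt_norm_sub
    (hX : DaugavetSliceCondition 𝕜 X) {f : X →L[𝕜] 𝕜} (hf : ‖f‖ = 1) {u : X} (hu : ‖u‖ ≤ 1)
    {ε : ℝ} (hε : 0 < ε) : ∃ w ∈ ballSlice f ε, 1 + ‖u‖ - ε < ‖u - w‖ := by
  rcases eq_or_ne u 0 with rfl | hu0
  · obtain ⟨w, hw⟩ := nonempty_ballSlice hf hε
    refine ⟨w, hw, ?_⟩
    have := (abs_le.mp (abs_re_apply_le_norm hf.le w)).2
    rw [zero_sub, norm_neg, norm_zero]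
    linarith [hw.2]
  · set u' : X := (‖u‖⁻¹ : 𝕜) • u
    obtain ⟨w, hw, hu'w⟩ := hX f hf u' (norm_smul_inv_norm hu0) ε hε
    have hu'u : ‖u' - u‖ = 1 - ‖u‖ := by
      have hpos : 0 < ‖u‖ := norm_pos_iff.mpr hu0
      have hsub : u' - u = ((‖u‖⁻¹ - 1 : ℝ) : 𝕜) • u := by simp [u', sub_smul]
      rw [hsub, norm_smul, norm_ofReal,
        abs_of_nonneg (by rw [sub_nonneg]; exact one_le_inv_iff₀.mpr ⟨hpos, hu⟩), sub_mul,
        inv_mul_cancel₀ hpos.ne', one_mul]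
    refine ⟨w, hw, ?_⟩
    linarith [norm_sub_le_norm_sub_add_norm_sub u' u w]

theorem isConvexCombOfSlices_pair {f g : X →L[𝕜] 𝕜} (hf : ‖f‖ = 1) (hg : ‖g‖ = 1)
    {α β l : ℝ} (hα : 0 < α) (hβ : 0 < β) (hl₀ : 0 < l) (hl₁ : l < 1) :
    IsConvexCombOfSlices (𝕜 := 𝕜) X
      {x | ∃ v ∈ ballSlice f α, ∃ w ∈ ballSlice g β, x = (l : 𝕜) • v + ((1 - l : ℝ) : 𝕜) • w} := by
  refine ⟨2, two_pos, ![f, g], ![α, β], ![l, 1 - l], ?_, ?_, ?_, by simp, ?_⟩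
  · intro i; fin_cases i <;> simp [hf, hg]
  · intro i; fin_cases i <;> simp [hα, hβ]
  · intro i; fin_cases i <;> simp [hl₀, hl₁]
  · ext x
    constructor
    · rintro ⟨v, hv, w, hw, rfl⟩
      refine ⟨![v, w], fun i => ?_, by simp [Fin.sum_univ_two]⟩
      fin_cases i <;> simpa
    · rintro ⟨y, hy, rfl⟩
      exact ⟨y 0, hy 0, y 1, hy 1, by simp [Fin.sum_univ_two]⟩

theorem DSD2P.daugavetSliceCondition (H : DSD2P 𝕜 X) : DaugavetSliceCondition 𝕜 X := by
  intro f hf u hu ε hε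
  obtain ⟨l, hl₀, hl₁, hlε⟩ : ∃ l : ℝ, 0 < l ∧ l ≤ 1 / 8 ∧ 8 * l ≤ ε :=
    ⟨min ε 1 / 8, by positivity, by linarith [min_le_right ε 1], by linarith [min_le_left ε 1]⟩
  obtain ⟨h, hh, hhu⟩ := exists_dual_vector 𝕜 u (by rw [hu]; exact one_ne_zero)
  obtain ⟨v₀, hv₀⟩ := nonempty_ballSlice hf hl₀
  have hu_mem : u ∈ ballSlice h 1 := ⟨hu.le, by simp [hhu, hu]⟩
  obtain ⟨_, ⟨v, hv, w, hw, rfl⟩, hfar⟩ :=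
    H _ (isConvexCombOfSlices_pair hf hh hl₀ one_pos hl₀ (by linarith)) (l ^ 2) (by positivity)
      _ ⟨v₀, hv₀, u, hu_mem, rfl⟩
  set x₀ : X := (l : 𝕜) • v₀ + ((1 - l : ℝ) : 𝕜) • u
  set y : X := (l : 𝕜) • v + ((1 - l : ℝ) : 𝕜) • w
  obtain ⟨p, hp, hpxy⟩ := exists_dual_vector'' 𝕜 (x₀ - y)
  have hre (a b : X) : re (p ((l : 𝕜) • a + ((1 - l : ℝ) : 𝕜) • b))
      = l * re (p a) + (1 - l) * re (p b) := by
    simp only [map_add, map_smul, smul_eq_mul, re_ofReal_mul]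
  have hx₀y : 1 + ‖x₀‖ - l ^ 2 < re (p x₀) - re (p y) := by
    rwa [← map_sub, ← map_sub, hpxy, ofReal_re]
  have hx₀ : 1 - 2 * l ≤ ‖x₀‖ := by
    have := norm_sub_le x₀ ((l : 𝕜) • v₀)
    rw [add_sub_cancel_left, norm_smul, norm_smul, norm_ofReal, norm_ofReal, abs_of_pos hl₀,
      abs_of_pos (by linarith), hu] at this
    nlinarith [hv₀.1]
  have hpv₀ := abs_le.mp (abs_re_apply_le_norm hp v₀)
  have hpu := abs_le.mp (abs_re_apply_le_norm hp u)
  have hpv := abs_le.mp (abs_re_apply_le_norm hp v)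
  have hpw := abs_le.mp (abs_re_apply_le_norm hp w)
  have hpx₀ := (abs_le.mp (abs_re_apply_le_norm hp x₀)).2
  rw [hre, hre] at hx₀y
  rw [hre] at hpx₀
  have hpv' : re (p v) < -(1 - l) := by nlinarith [hv.1, hw.1]
  have hpu' : 1 - 4 * l < re (p u) := by nlinarith [hv.1, hw.1, hv₀.1]
  refine ⟨v, ballSlice_mono (by linarith) hv, ?_⟩
  have := (abs_le.mp (abs_re_apply_le_norm hp (u - v))).2
  rw [map_sub, map_sub] at this
  linarith

theorem ContinuousLinearMap.exists_eq_smulRight_of_finrank_range_eq_one {Y : Type*}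
    [NormedAddCommGroup Y] [NormedSpace 𝕜 Y] {T : X →L[𝕜] Y}
    (hT : Module.finrank 𝕜 (LinearMap.range (T : X →ₗ[𝕜] Y)) = 1) :
    ∃ (φ : X →L[𝕜] 𝕜) (e : Y), ‖e‖ = 1 ∧ T = φ.smulRight e := by
  obtain ⟨⟨v, _⟩, hv, hspan⟩ := finrank_eq_one_iff'.mp hT
  replace hv : v ≠ 0 := by simpa using hv
  have hnv : (‖v‖ : 𝕜) ≠ 0 := ofReal_ne_zero.mpr (norm_ne_zero_iff.mpr hv)
  obtain ⟨g, -, hgv⟩ := exists_dual_vector'' 𝕜 v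
  refine ⟨g.comp T, (‖v‖⁻¹ : 𝕜) • v, norm_smul_inv_norm hv, ?_⟩
  ext z
  obtain ⟨c, hc⟩ := hspan ⟨T z, LinearMap.mem_range_self _ z⟩
  replace hc : c • v = T z := congrArg Subtype.val hc
  rw [smulRight_apply, comp_apply, ← hc, map_smul, hgv, smul_smul, smul_eq_mul, mul_assoc,
    mul_inv_cancel₀ hnv, mul_one]

theorem DaugavetSliceCondition.norm_id_sub_smulRight (hX : DaugavetSliceCondition 𝕜 X)
    (φ : X →L[𝕜] 𝕜) {e : X} (he : ‖e‖ = 1) :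
    ‖ContinuousLinearMap.id 𝕜 X - φ.smulRight e‖ = 1 + ‖φ‖ := by
  refine le_antisymm ?_ ?_
  · calc _ ≤ ‖ContinuousLinearMap.id 𝕜 X‖ + ‖φ.smulRight e‖ := norm_sub_le _ _
      _ ≤ 1 + ‖φ‖ := by
        rw [norm_smulRight_apply, he, mul_one]
        gcongr
        exact norm_id_le
  rcases eq_or_ne φ 0 with rfl | hφ
  · have : Nontrivial X := nontrivial_of_ne e 0 (by rintro rfl; simp at he)
    simp
  refine le_of_forall_pos_lt_add fun δ hδ => ?_
  set t := ‖φ‖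
  have ht : 0 < t := norm_pos_iff.mpr hφ
  set g : X →L[𝕜] 𝕜 := (t⁻¹ : 𝕜) • φ
  have hφg (x : X) : φ x = t * g x := by
    rw [smul_apply, smul_eq_mul, ← mul_assoc, mul_inv_cancel₀ (ofReal_ne_zero.mpr ht.ne'), one_mul]
  set ε := δ / (4 * (t + 1))
  have hε : 0 < ε := by positivity
  obtain ⟨w, hw, hew⟩ := hX g (norm_smul_inv_norm hφ) e he ε hε
  obtain ⟨q, hq, hqew⟩ := exists_dual_vector'' 𝕜 (e - w)
  have hqe := abs_le.mp (abs_re_apply_le_norm hq e)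
  have hqw := abs_le.mp (abs_re_apply_le_norm hq w)
  rw [he] at hqe
  have hsum : re (q e) - re (q w) = ‖e - w‖ := by rw [← map_sub, ← map_sub, hqew, ofReal_re]
  have hgq : 1 - 4 * ε < re (g w * q e) :=
    one_sub_four_mul_lt_re_mul ((g.le_of_opNorm_le (norm_smul_inv_norm hφ).le w).trans
      (by simpa using hw.1)) ((q.le_of_opNorm_le hq e).trans (by simp [he])) hw.2
      (by linarith [hw.1])
  calc 1 + t < t * re (g w * q e) - re (q w) + δ := by
        have : 4 * ε * (t + 1) = δ := by simp only [ε]; field_simp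
        nlinarith
    _ = re (q (φ w • e - w)) + δ := by
        rw [map_sub, map_smul, smul_eq_mul, hφg, mul_assoc, map_sub, re_ofReal_mul]
    _ ≤ ‖(ContinuousLinearMap.id 𝕜 X - φ.smulRight e) w‖ + δ := by
        rw [sub_apply, id_apply, smulRight_apply, norm_sub_rev]
        gcongr
        exact (abs_le.mp (abs_re_apply_le_norm hq _)).2
    _ ≤ ‖ContinuousLinearMap.id 𝕜 X - φ.smulRight e‖ + δ := by
        gcongr
        exact (le_opNorm_of_le _ hw.1).trans_eq (mul_one _)

theorem DaugavetProperty.daugavetSliceCondition (hX : DaugavetProperty 𝕜 X) :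
    DaugavetSliceCondition 𝕜 X := by
  intro f hf u hu ε hε
  have hf0 : f ≠ 0 := by rintro rfl; simp at hf
  have hu0 : u ≠ 0 := by rintro rfl; simp at hu
  have hT := hX (f.smulRight u) (by
    rw [range_smulRight_apply hf0]
    exact finrank_span_singleton hu0)
  rw [norm_smulRight_apply, hf, hu] at hT
  obtain ⟨z, hz, hfar⟩ := (ContinuousLinearMap.id 𝕜 X - f.smulRight u).exists_lt_apply_of_lt_opNorm
    (r := 2 - ε / 2) (by rw [hT]; linarith)
  rw [sub_apply, id_apply, smulRight_apply] at hfar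
  have hfz : 1 - ε / 2 < ‖f z‖ := by
    have := norm_sub_le z (f z • u)
    rw [norm_smul, hu, mul_one] at this
    linarith
  have hfz1 : ‖f z‖ ≤ 1 := (f.le_of_opNorm_le hf.le z).trans (by linarith)
  obtain ⟨c, hc, hcz⟩ := exists_norm_eq_mul_self (f z)
  refine ⟨c • z, ⟨by rw [norm_smul, hc, one_mul]; exact hz.le, ?_⟩, ?_⟩
  · rw [map_smul, smul_eq_mul, ← hcz, ofReal_re]
    linarith
  have hrot : ‖c • z - (‖f z‖ : 𝕜) • u‖ = ‖z - f z • u‖ := by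
    rw [hcz, ← smul_smul, ← smul_sub, norm_smul, hc, one_mul]
  have hu_sub : ‖u - (‖f z‖ : 𝕜) • u‖ = 1 - ‖f z‖ := by
    have : u - (‖f z‖ : 𝕜) • u = ((1 - ‖f z‖ : ℝ) : 𝕜) • u := by simp [sub_smul]
    rw [this, norm_smul, norm_ofReal, hu, mul_one, abs_of_nonneg (by linarith)]
  linarith [norm_sub_le_norm_sub_add_norm_sub (c • z) u ((‖f z‖ : 𝕜) • u), norm_sub_rev u (c • z)]

theorem DaugavetSliceCondition.exists_functional_far_from_slices (hX : DaugavetSliceCondition 𝕜 X)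
    {n : ℕ} {f : Fin n → X →L[𝕜] 𝕜} (hf : ∀ i, ‖f i‖ = 1) {α : Fin n → ℝ} (hα : ∀ i, 0 < α i)
    {u : X} (hu : ‖u‖ ≤ 1) {ε : ℝ} (hε : 0 < ε) :
    ∃ (h : X →L[𝕜] 𝕜) (w : Fin n → X), ‖h‖ ≤ 1 ∧ (∀ i, w i ∈ ballSlice (f i) (α i)) ∧
      ‖u‖ - ε < re (h u) ∧ ∀ i, re (h (w i)) < -(1 - ε) := by
  induction n generalizing u ε with
  | zero =>
    obtain ⟨h, hh, hhu⟩ := exists_dual_vector'' 𝕜 u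
    exact ⟨h, Fin.elim0, hh, fun i => i.elim0, by simp [hhu, hε], fun i => i.elim0⟩
  | succ n ih =>
    obtain ⟨ε', hε', hε'1, hε'ε⟩ : ∃ ε' : ℝ, 0 < ε' ∧ ε' ≤ 1 / 3 ∧ 3 * ε' ≤ ε :=
      ⟨min ε 1 / 3, by positivity, by linarith [min_le_right ε 1], by linarith [min_le_left ε 1]⟩
    obtain ⟨w₀, hw₀, hfar⟩ := hX.exists_mem_ballSlice_lt_norm_sub (hf 0) hu
      (lt_min (hα 0) hε')
    set r := ‖u - w₀‖
    have hr : 0 < r := by linarith [norm_nonneg u, min_le_right (α 0) ε']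
    have hunit : ‖(r⁻¹ : 𝕜) • (u - w₀)‖ = 1 := norm_smul_inv_norm (norm_pos_iff.mp hr)
    have hr2 : r ≤ 2 := (norm_sub_le u w₀).trans (by linarith [hw₀.1])
    obtain ⟨h, w, hh, hw, hhu', hhw⟩ := ih (fun i => hf i.succ) (fun i => hα i.succ)
      hunit.le hε'
    rw [hunit] at hhu'
    have hhuw : r - 2 * ε' < re (h (u - w₀)) := by
      have : re (h (u - w₀)) = r * re (h ((r⁻¹ : 𝕜) • (u - w₀))) := by
        rw [map_smul, smul_eq_mul, ← ofReal_inv, re_ofReal_mul, ← mul_assoc,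
          mul_inv_cancel₀ hr.ne', one_mul]
      rw [this]
      nlinarith
    have hhu := abs_le.mp (abs_re_apply_le_norm hh u)
    have hhw₀ := abs_le.mp (abs_re_apply_le_norm hh w₀)
    rw [map_sub, map_sub] at hhuw
    refine ⟨h, Fin.cons w₀ w, hh, Fin.cases (ballSlice_mono (min_le_left _ _) hw₀) hw, ?_,
      Fin.cases ?_ fun i => (hhw i).trans_le (by linarith)⟩
    · linarith [min_le_right (α 0) ε', hw₀.1]
    · simp only [Fin.cons_zero]
      linarith [min_le_right (α 0) ε', hw₀.1]

theorem DaugavetSliceCondition.dsd2p (hX : DaugavetSliceCondition 𝕜 X) : DSD2P 𝕜 X := by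
  rintro _ ⟨n, hn, f, α, lam, hf, hα, hlam, hsum, rfl⟩ δ hδ _ ⟨y, hy, rfl⟩
  have : Nonempty (Fin n) := ⟨⟨0, hn⟩⟩
  set x := ∑ i, (lam i : 𝕜) • y i
  obtain ⟨h, w, hh, hw, hhx, hhw⟩ := hX.exists_functional_far_from_slices hf hα
    (norm_sum_ofReal_smul_le_one (𝕜 := 𝕜) (fun i => (hlam i).le) hsum fun i => (hy i).1)
    (half_pos hδ)
  refine ⟨_, ⟨w, hw, rfl⟩, ?_⟩
  have hhz := re_apply_sum_ofReal_smul_lt hlam hsum h hhw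
  have := (abs_le.mp (abs_re_apply_le_norm hh (x - ∑ i, (lam i : 𝕜) • w i))).2
  rw [map_sub, map_sub] at this
  linarith

end

theorem dsd2p_iff_daugavet_property_general {𝕜 : Type*} [RCLike 𝕜] {X : Type*}
    [NormedAddCommGroup X] [NormedSpace 𝕜 X] :
    DSD2P 𝕜 X ↔
      ∀ T : X →L[𝕜] X, Module.finrank 𝕜 (LinearMap.range (T : X →ₗ[𝕜] X)) = 1 →
        ‖ContinuousLinearMap.id 𝕜 X - T‖ = 1 + ‖T‖ := by
  refine ⟨fun H T hT => ?_, fun H => (DaugavetProperty.daugavetSliceCondition (𝕜 := 𝕜) H).dsd2p⟩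
  obtain ⟨φ, e, he, rfl⟩ := T.exists_eq_smulRight_of_finrank_range_eq_one hT
  rw [ContinuousLinearMap.norm_smulRight_apply, he, mul_one]
  exact H.daugavetSliceCondition.norm_id_sub_smulRight φ he

/-- A Banach space `X` has the DSD2P if and only if `X` has the Daugavet property,
i.e. iff every rank-one bounded linear operator `T : X → X` satisfies
`‖Id - T‖ = 1 + ‖T‖`. -/
theorem dsd2p_iff_daugavet_property {𝕜 : Type*} [RCLike 𝕜] {X : Type*}
    [NormedAddCommGroup X] [NormedSpace 𝕜 X] [CompleteSpace X] :
    DSD2P 𝕜 X ↔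
      ∀ T : X →L[𝕜] X, Module.finrank 𝕜 (LinearMap.range (T : X →ₗ[𝕜] X)) = 1 →
        ‖ContinuousLinearMap.id 𝕜 X - T‖ = 1 + ‖T‖ :=
  dsd2p_iff_daugavet_property_general
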